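/- arXiv:1311.2705 — 2 statements merged into one kernel-verified Lean document; each statement's English description precedes it below -/
import Mathlib

section
/- Let q = 2^s, F = 𝔽_{q²}, n = 2q², and let (a₁,b₁),…,(a_n,b_n) be an enumeration of all pairs in F × F with b_k² + b_k = a_k^{q+1}. For a nonnegative integer m let C_m ⊆ F^n be the F-linear span of the vectors ((a_k)^i (b_k)^j)_{k=1,…,n} over all pairs (i,j) of nonnegative integers with j ≤ 1 and 2i + (q+1)j ≤ m. If m ≥ q − 1, then every nonzero vector in the Hermitian dual C_m^{⊥H} = {v ∈ F^n : Σ_k v_k (c_k)^q = 0 for all c ∈ C_m} has Hamming weight at least m − q + 2. -/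
open Polynomial Finset Module

section Aux

variable {q : ℕ} {F : Type} [Field F] [Fintype F]

-- characteristic 2
lemma aux_char2 {s : ℕ} (hs : 0 < s) (hq : q = 2 ^ s) (hF : Fintype.card F = q ^ 2) :
    CharP F 2 := by
  obtain ⟨p, hc⟩ := CharP.exists F
  haveI := hc
  obtain ⟨np, hnp, hcard⟩ := FiniteField.card F p
  have hp : p.Prime := hnp
  have h2 : (2:ℕ).Prime := Nat.prime_two
  have hdvd : p ∣ 2 ^ (2*s) := by
    have h : p ^ (np:ℕ) = 2 ^ (2*s) := by
      rw [← hcard, hF, hq, ← pow_mul, mul_comm s 2]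
    rw [← h]
    exact dvd_pow_self p np.pos.ne'
  have hp2 : p = 2 := by
    rcases (Nat.Prime.eq_one_or_self_of_dvd h2 p (hp.dvd_of_dvd_pow hdvd)) with h | h
    · exact absurd h hp.one_lt.ne'
    · exact h
  rwa [hp2] at hc

end Aux

section Aux2

variable {q n : ℕ} {F : Type} [Field F] [Fintype F]

open scoped Classical in
lemma aux_fiber [CharP F 2] (hF : Fintype.card F = q ^ 2) (hn : n = 2 * q ^ 2)
    (pt : Fin n → F × F) (hinj : Function.Injective pt)
    (hrange : ∀ p : F × F, p ∈ Set.range pt ↔ p.2 ^ 2 + p.2 = p.1 ^ (q + 1)) :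
    ∀ a : F, ∃ b : F, b ^ 2 + b = a ^ (q + 1) ∧
      (Finset.univ.filter (fun p : F × F => p.2 ^ 2 + p.2 = p.1 ^ (q+1))).filter
        (fun p => p.1 = a) = {(a, b), (a, b + 1)} := by
  classical
  have h2 : (2 : F) = 0 := by
    have := CharP.cast_eq_zero F 2; exact_mod_cast this
  set S : Finset (F × F) :=
    Finset.univ.filter (fun p : F × F => p.2 ^ 2 + p.2 = p.1 ^ (q+1)) with hS
  have hmemS : ∀ p : F × F, p ∈ S ↔ p.2 ^ 2 + p.2 = p.1 ^ (q+1) := by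
    intro p; simp [hS]
  have hSim : Finset.image pt Finset.univ = S := by
    ext p
    rw [Finset.mem_image, hmemS, ← hrange]
    constructor
    · rintro ⟨k, _, hk⟩; exact ⟨k, hk⟩
    · rintro ⟨k, hk⟩; exact ⟨k, Finset.mem_univ k, hk⟩
  have hScard : S.card = n := by
    rw [← hSim, Finset.card_image_of_injective _ hinj, Finset.card_univ,
      Fintype.card_fin]
  have hpairne : ∀ b : F, b ≠ b + 1 := by
    intro b hb
    have : (1 : F) = 0 := by
      have := congrArg (fun x => x - b) hb
      simpa using this.symm
    simp at this
  have hpaircard : ∀ a b : F, ({(a, b), (a, b + 1)} : Finset (F × F)).card = 2 := by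
    intro a b
    rw [Finset.card_insert_of_notMem, Finset.card_singleton]
    simp only [Finset.mem_singleton]
    intro hcon
    exact hpairne b (congrArg Prod.snd hcon)
  have key : ∀ a b : F, b ^ 2 + b = a ^ (q+1) →
      S.filter (fun p => p.1 = a) ⊆ {(a, b), (a, b + 1)} := by
    intro a b hb p hp
    rw [Finset.mem_filter, hmemS] at hp
    obtain ⟨hpc, hpa⟩ := hp
    have hthis : p.2 ^ 2 + p.2 = b ^ 2 + b := by rw [hpc, hb, hpa]
    have hx : (p.2 + b) * ((p.2 + b) + 1) = 0 := by
      linear_combination hthis + (b ^ 2 + b + p.2 * b) * h2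
    rcases mul_eq_zero.mp hx with hy | hy
    · have : p.2 = b := by linear_combination hy - b * h2
      rw [Finset.mem_insert, Finset.mem_singleton]
      left
      exact Prod.ext hpa this
    · have : p.2 = b + 1 := by linear_combination hy - (b + 1) * h2
      rw [Finset.mem_insert, Finset.mem_singleton]
      right
      exact Prod.ext hpa this
  have hcardle : ∀ a : F, (S.filter (fun p => p.1 = a)).card ≤ 2 := by
    intro a
    rcases Finset.eq_empty_or_nonempty (S.filter (fun p => p.1 = a)) with he | hne
    · rw [he]; simp
    · obtain ⟨p₀, hp₀⟩ := hne
      have hmem := hp₀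
      rw [Finset.mem_filter, hmemS] at hmem
      calc (S.filter (fun p => p.1 = a)).card
          ≤ ({(a, p₀.2), (a, p₀.2 + 1)} : Finset (F × F)).card :=
            Finset.card_le_card (by
              have := key a p₀.2 (by rw [hmem.1, hmem.2]); exact this)
        _ = 2 := hpaircard a p₀.2
  have hsum : ∑ a : F, (S.filter (fun p => p.1 = a)).card = n := by
    rw [← hScard]
    exact (Finset.card_eq_sum_card_fiberwise (fun p _ => Finset.mem_univ p.1)).symm
  have hall2 : ∀ a : F, (S.filter (fun p => p.1 = a)).card = 2 := by
    by_contra hcon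
    push_neg at hcon
    obtain ⟨a₀, ha₀⟩ := hcon
    have hlt : (S.filter (fun p => p.1 = a₀)).card < 2 :=
      lt_of_le_of_ne (hcardle a₀) ha₀
    have : ∑ a : F, (S.filter (fun p => p.1 = a)).card < ∑ _a : F, 2 :=
      Finset.sum_lt_sum (fun a _ => hcardle a) ⟨a₀, Finset.mem_univ a₀, hlt⟩
    rw [hsum, Finset.sum_const, Finset.card_univ, hF, smul_eq_mul, hn] at this
    omega
  intro a
  have h2a := hall2 a
  have hne : (S.filter (fun p => p.1 = a)).Nonempty := by
    rw [← Finset.card_pos, h2a]; omega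
  obtain ⟨p₀, hp₀⟩ := hne
  have hmem := hp₀
  rw [Finset.mem_filter, hmemS] at hmem
  refine ⟨p₀.2, by rw [hmem.1, hmem.2], ?_⟩
  exact Finset.eq_of_subset_of_card_le (key a p₀.2 (by rw [hmem.1, hmem.2]))
    (by rw [hpaircard, h2a])

end Aux2

section Aux3

variable {q n : ℕ} {F : Type} [Field F] [Fintype F]

open scoped Classical in
lemma aux_sum_pairs [CharP F 2] (hF : Fintype.card F = q ^ 2) (hn : n = 2 * q ^ 2)
    (pt : Fin n → F × F) (hinj : Function.Injective pt)
    (hrange : ∀ p : F × F, p ∈ Set.range pt ↔ p.2 ^ 2 + p.2 = p.1 ^ (q + 1))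
    (g : F × F → F) (h : F → F)
    (hg : ∀ a b : F, b ^ 2 + b = a ^ (q + 1) → g (a, b) + g (a, b + 1) = h a) :
    ∑ k, g (pt k) = ∑ a : F, h a := by
  set S : Finset (F × F) :=
    Finset.univ.filter (fun p : F × F => p.2 ^ 2 + p.2 = p.1 ^ (q+1)) with hS
  have hSim : Finset.image pt Finset.univ = S := by
    ext p
    rw [Finset.mem_image, hS, Finset.mem_filter]
    constructor
    · rintro ⟨k, _, hk⟩
      exact ⟨Finset.mem_univ p, (hrange p).mp ⟨k, hk⟩⟩
    · rintro ⟨_, hk⟩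
      obtain ⟨k, hk'⟩ := (hrange p).mpr hk
      exact ⟨k, Finset.mem_univ k, hk'⟩
  have h1 : ∑ k, g (pt k) = ∑ p ∈ S, g p := by
    rw [← hSim, Finset.sum_image (fun a _ b _ hab => hinj hab)]
  rw [h1, ← Finset.sum_fiberwise S (fun p => p.1) g]
  apply Finset.sum_congr rfl
  intro a _
  obtain ⟨b, hb, hfib⟩ := aux_fiber hF hn pt hinj hrange a
  have : S.filter (fun p => p.1 = a) = {(a, b), (a, b + 1)} := hfib
  rw [this, Finset.sum_pair (by
    intro hcon
    have h1 : (1 : F) ≠ 0 := one_ne_zero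
    have := congrArg Prod.snd hcon
    simp only at this
    apply h1
    have := congrArg (fun x => x - b) this
    simpa using this.symm)]
  exact hg a b hb

end Aux3

section Aux4

variable {q n : ℕ} {F : Type} [Field F] [Fintype F]

variable [CharP F 2] (hF : Fintype.card F = q ^ 2) (hn : n = 2 * q ^ 2)
    (pt : Fin n → F × F) (hinj : Function.Injective pt)
    (hrange : ∀ p : F × F, p ∈ Set.range pt ↔ p.2 ^ 2 + p.2 = p.1 ^ (q + 1))

include hF hn hinj hrange

lemma aux_sum_eval0 (P : F[X]) : ∑ k, P.eval (pt k).1 = 0 := by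
  have h2 : (2 : F) = 0 := by
    have := CharP.cast_eq_zero F 2; exact_mod_cast this
  have := aux_sum_pairs hF hn pt hinj hrange (fun p => P.eval p.1) (fun _ => 0)
    (fun a b _ => by simp only; linear_combination P.eval a * h2)
  rw [this, Finset.sum_const, smul_zero]

lemma aux_sum_eval1 (P : F[X]) :
    ∑ k, P.eval (pt k).1 * (pt k).2 = ∑ a : F, P.eval a := by
  have h2 : (2 : F) = 0 := by
    have := CharP.cast_eq_zero F 2; exact_mod_cast this
  exact aux_sum_pairs hF hn pt hinj hrange (fun p => P.eval p.1 * p.2)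
    (fun a => P.eval a)
    (fun a b _ => by simp only; linear_combination P.eval a * b * h2)

lemma aux_sum_eval2 (P : F[X]) :
    ∑ k, P.eval (pt k).1 * (pt k).2 ^ 2 = ∑ a : F, P.eval a := by
  have h2 : (2 : F) = 0 := by
    have := CharP.cast_eq_zero F 2; exact_mod_cast this
  exact aux_sum_pairs hF hn pt hinj hrange (fun p => P.eval p.1 * p.2 ^ 2)
    (fun a => P.eval a)
    (fun a b _ => by
      simp only
      linear_combination (P.eval a * b ^ 2 + P.eval a * b) * h2)

end Aux4

section Aux5

variable {q : ℕ} {F : Type} [Field F] [Fintype F]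

lemma aux_sp_small (hF : Fintype.card F = q ^ 2) (e : ℕ) (he : e < q ^ 2 - 1) :
    ∑ a : F, a ^ e = 0 := by
  apply FiniteField.sum_pow_lt_card_sub_one
  omega

lemma aux_sp_q [CharP F 2] (hF : Fintype.card F = q ^ 2) (hq2 : 2 ≤ q) :
    ∑ a : F, a ^ (q ^ 2 - 1) = 1 := by
  classical
  have hq4 : 4 ≤ q ^ 2 := by nlinarith
  have hq1 : 1 ≤ q ^ 2 := by omega
  have he0 : q ^ 2 - 1 ≠ 0 := by omega
  rw [← Finset.sum_erase_add Finset.univ _ (Finset.mem_univ (0 : F))]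
  rw [zero_pow he0, add_zero]
  have : ∀ a ∈ Finset.univ.erase (0 : F), a ^ (q ^ 2 - 1) = 1 := by
    intro a ha
    have ha0 : a ≠ 0 := Finset.ne_of_mem_erase ha
    have := FiniteField.pow_card_sub_one_eq_one a ha0
    rwa [hF] at this
  rw [Finset.sum_congr rfl this, Finset.sum_const, Finset.card_erase_of_mem
    (Finset.mem_univ _), Finset.card_univ, hF, nsmul_eq_mul, mul_one]
  have : ((q ^ 2 - 1 : ℕ) : F) = ((q ^ 2 : ℕ) : F) - 1 := by
    rw [Nat.cast_sub hq1, Nat.cast_one]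
  rw [this, ← hF, FiniteField.cast_card_eq_zero, zero_sub]
  have := CharP.cast_eq_zero F 2
  have h2 : (2 : F) = 0 := by exact_mod_cast this
  linear_combination -h2

lemma aux_sp_mid [CharP F 2] (hF : Fintype.card F = q ^ 2) (hq2 : 2 ≤ q) (e : ℕ)
    (h1 : q ^ 2 - 1 < e) (h2 : e < 2 * (q ^ 2 - 1)) : ∑ a : F, a ^ e = 0 := by
  have hq1 : 2 ≤ q ^ 2 := by nlinarith
  have key : ∀ a : F, a ^ e = a ^ (e - (q ^ 2 - 1)) := by
    intro a
    rcases eq_or_ne a 0 with rfl | ha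
    · rw [zero_pow (by omega), zero_pow (by omega)]
    · have hu := FiniteField.pow_card_sub_one_eq_one a ha
      rw [hF] at hu
      have heq : e = (e - (q ^ 2 - 1)) + (q ^ 2 - 1) := by omega
      conv_lhs => rw [heq]
      rw [pow_add, hu, mul_one]
  rw [Finset.sum_congr rfl (fun a _ => key a)]
  exact aux_sp_small hF _ (by omega)

lemma aux_sum_poly_coeff (P : F[X]) :
    ∑ a : F, P.eval a =
      ∑ i ∈ Finset.range (P.natDegree + 1), P.coeff i * ∑ a : F, a ^ i := by
  have : ∀ a : F, P.eval a = ∑ i ∈ Finset.range (P.natDegree + 1), P.coeff i * a ^ i :=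
    fun a => Polynomial.eval_eq_sum_range a
  rw [Finset.sum_congr rfl (fun a _ => this a), Finset.sum_comm]
  exact Finset.sum_congr rfl (fun i _ => by rw [Finset.mul_sum])

lemma aux_SF (hF : Fintype.card F = q ^ 2) (hq2 : 2 ≤ q) (P : F[X])
    (hdeg : P.natDegree ≤ q ^ 2 - 2) : ∑ a : F, P.eval a = 0 := by
  have hq1 : 2 ≤ q ^ 2 := by nlinarith
  rw [aux_sum_poly_coeff]
  apply Finset.sum_eq_zero
  intro i hi
  rw [Finset.mem_range] at hi
  rw [aux_sp_small hF i (by omega), mul_zero]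

end Aux5

section Aux6

variable {q n : ℕ} {F : Type} [Field F] [Fintype F]

open scoped Classical in
lemma aux_zerocount [CharP F 2] (hF : Fintype.card F = q ^ 2) (hn : n = 2 * q ^ 2)
    (pt : Fin n → F × F) (hinj : Function.Injective pt)
    (hrange : ∀ p : F × F, p ∈ Set.range pt ↔ p.2 ^ 2 + p.2 = p.1 ^ (q + 1))
    (hq2 : 2 ≤ q) (hqe : 2 ∣ q)
    (A B : F[X]) (mm : ℕ) (hAB : ¬(A = 0 ∧ B = 0))
    (hdA : 2 * A.natDegree ≤ mm)
    (hdB : B = 0 ∨ q + 1 + 2 * B.natDegree ≤ mm) :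
    (Finset.univ.filter
      (fun k : Fin n => A.eval (pt k).1 + B.eval (pt k).1 * (pt k).2 = 0)).card ≤ mm := by
  classical
  have h2 : (2 : F) = 0 := by
    have := CharP.cast_eq_zero F 2; exact_mod_cast this
  set P : F[X] := A ^ 2 + A * B + X ^ (q + 1) * B ^ 2 with hP
  have h2p : (2 : F[X]) = 0 := by
    have : ((2 : ℕ) : F[X]) = 0 := by
      rw [← Polynomial.C_eq_natCast, Nat.cast_ofNat, h2, map_zero]
    exact_mod_cast this
  have hXne : (X ^ (q + 1) : F[X]) ≠ 0 := pow_ne_zero _ Polynomial.X_ne_zero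
  -- P ≠ 0
  have hPne : P ≠ 0 := by
    rcases eq_or_ne B 0 with rfl | hB
    · have hA : A ≠ 0 := fun h => hAB ⟨h, rfl⟩
      simpa [hP] using pow_ne_zero 2 hA
    · intro hPz
      rw [hP] at hPz
      have hEq : A * (A + B) = X ^ (q + 1) * B ^ 2 := by
        linear_combination hPz - (X ^ (q + 1) * B ^ 2) * h2p
      have hRdeg : (X ^ (q + 1) * B ^ 2 : F[X]).natDegree = q + 1 + 2 * B.natDegree := by
        rw [natDegree_mul hXne (pow_ne_zero 2 hB), natDegree_X_pow, natDegree_pow]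
      have hRne : (X ^ (q + 1) * B ^ 2 : F[X]) ≠ 0 := mul_ne_zero hXne (pow_ne_zero 2 hB)
      have hA : A ≠ 0 := by
        intro hA0
        rw [hA0, zero_mul] at hEq
        exact hRne hEq.symm
      have hABne : A + B ≠ 0 := by
        intro hs
        have hBA : B = A := by linear_combination hs - A * h2p
        rw [hBA] at hPz
        have hz : X ^ (q + 1) * A ^ 2 = 0 := by linear_combination hPz - A ^ 2 * h2p
        exact (mul_ne_zero hXne (pow_ne_zero 2 hA)) hz
      rcases le_or_gt A.natDegree B.natDegree with hle | hlt
      · have hdeg1 : (A * (A + B)).natDegree ≤ A.natDegree + B.natDegree := by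
          refine le_trans natDegree_mul_le ?_
          have := natDegree_add_le A B
          omega
        have hcon : (A * (A + B)).natDegree < (X ^ (q + 1) * B ^ 2 : F[X]).natDegree := by
          rw [hRdeg]; omega
        rw [hEq] at hcon
        omega
      · have hABd : (A + B).natDegree = A.natDegree :=
          natDegree_add_eq_left_of_natDegree_lt hlt
        have hLdeg : (A * (A + B)).natDegree = 2 * A.natDegree := by
          rw [natDegree_mul hA hABne, hABd]; ring
        rw [hEq, hRdeg] at hLdeg
        omega
  -- degree bound
  have hPdeg : P.natDegree ≤ mm := by
    have h1 : (A ^ 2).natDegree ≤ mm := by rw [natDegree_pow]; omega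
    have h2' : (A * B).natDegree ≤ mm := by
      rcases hdB with rfl | hdB'
      · simpa using Nat.zero_le mm
      · exact le_trans natDegree_mul_le (by omega)
    have h3 : (X ^ (q + 1) * B ^ 2 : F[X]).natDegree ≤ mm := by
      rcases hdB with rfl | hdB'
      · simp
      · refine le_trans natDegree_mul_le ?_
        rw [natDegree_X_pow, natDegree_pow]
        omega
    calc P.natDegree ≤ max (A ^ 2 + A * B).natDegree (X ^ (q + 1) * B ^ 2 : F[X]).natDegree :=
          natDegree_add_le _ _
      _ ≤ mm := by
          refine max_le (le_trans (natDegree_add_le _ _) ?_) h3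
          exact max_le h1 h2'
  -- fiberwise count
  set Z : Finset (Fin n) := Finset.univ.filter
      (fun k : Fin n => A.eval (pt k).1 + B.eval (pt k).1 * (pt k).2 = 0) with hZ
  have hZcard : Z.card = ∑ a : F, (Z.filter (fun k => (pt k).1 = a)).card :=
    Finset.card_eq_sum_card_fiberwise (fun k _ => Finset.mem_univ ((pt k).1))
  have hfibbound : ∀ a : F, (Z.filter (fun k => (pt k).1 = a)).card ≤ P.roots.count a := by
    intro a
    obtain ⟨b, hb, hfib⟩ := aux_fiber hF hn pt hinj hrange a
    -- every k in the fiber has (pt k).2 ∈ {b, b+1}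
    have hsnd : ∀ k ∈ Z.filter (fun k => (pt k).1 = a),
        (pt k) = (a, b) ∨ (pt k) = (a, b + 1) := by
      intro k hk
      rw [Finset.mem_filter] at hk
      have hcur : (pt k).2 ^ 2 + (pt k).2 = (pt k).1 ^ (q + 1) :=
        (hrange (pt k)).mp ⟨k, rfl⟩
      have : pt k ∈ ({(a, b), (a, b + 1)} : Finset (F × F)) := by
        rw [← hfib, Finset.mem_filter, Finset.mem_filter]
        exact ⟨⟨Finset.mem_univ _, hcur⟩, hk.2⟩
      rwa [Finset.mem_insert, Finset.mem_singleton] at this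
    have hcardle2 : (Z.filter (fun k => (pt k).1 = a)).card ≤ 2 := by
      have : (Z.filter (fun k => (pt k).1 = a)).card ≤
          ({(a, b), (a, b + 1)} : Finset (F × F)).card := by
        apply Finset.card_le_card_of_injOn pt
        · intro k hk
          rcases hsnd k hk with h | h <;> simp [h]
        · intro k1 _ k2 _ h
          exact hinj h
      refine le_trans this ?_
      refine le_trans (Finset.card_insert_le _ _) ?_
      simp
    rcases Nat.eq_zero_or_pos (Z.filter (fun k => (pt k).1 = a)).card with hzero | hpos
    · rw [hzero]; exact Nat.zero_le _
    · -- there is at least one zero above a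
      obtain ⟨k₀, hk₀⟩ := Finset.card_pos.mp hpos
      have hk₀' := hk₀
      rw [Finset.mem_filter] at hk₀'
      obtain ⟨hk₀Z, hk₀a⟩ := hk₀'
      rw [hZ, Finset.mem_filter] at hk₀Z
      have hzero₀ : A.eval a + B.eval a * (pt k₀).2 = 0 := by
        rw [← hk₀a]; exact hk₀Z.2
      have hcur₀ : (pt k₀).2 ^ 2 + (pt k₀).2 = a ^ (q + 1) := by
        rw [← hk₀a]; exact (hrange (pt k₀)).mp ⟨k₀, rfl⟩
      have hfact : P.eval a =
          (A.eval a + B.eval a * (pt k₀).2) * (A.eval a + B.eval a * ((pt k₀).2 + 1)) := by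
        simp only [hP, eval_add, eval_mul, eval_pow, eval_X]
        linear_combination (- (B.eval a) ^ 2) * hcur₀ -
          (A.eval a * B.eval a * (pt k₀).2) * h2
      have hProot : P.IsRoot a := by
        rw [IsRoot, hfact, hzero₀, zero_mul]
      have hmem : a ∈ P.roots := by
        rw [Polynomial.mem_roots hPne]; exact hProot
      have hzeros : ∀ k ∈ Z.filter (fun k => (pt k).1 = a),
          A.eval a + B.eval a * (pt k).2 = 0 := by
        intro k hk
        rw [Finset.mem_filter] at hk
        obtain ⟨hkZ, hka⟩ := hk
        rw [hZ, Finset.mem_filter] at hkZ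
        rw [← hka]
        exact hkZ.2
      rcases Nat.lt_or_ge (Z.filter (fun k => (pt k).1 = a)).card 2 with hlt2 | hge2
      · have : (Z.filter (fun k => (pt k).1 = a)).card = 1 := by omega
        rw [this]
        exact Multiset.one_le_count_iff_mem.mpr hmem
      · have hc2 : 2 = (Z.filter (fun k => (pt k).1 = a)).card := le_antisymm hge2 hcardle2
        -- two distinct zeros above a: A(a) = B(a) = 0
        obtain ⟨k1, hk1, k2, hk2, hk12⟩ := Finset.one_lt_card.mp (by omega :
          1 < (Z.filter (fun k => (pt k).1 = a)).card)
        have hb12 : (pt k1).2 ≠ (pt k2).2 := by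
          intro hsnd2
          apply hk12
          apply hinj
          have ha1 : (pt k1).1 = a := (Finset.mem_filter.mp hk1).2
          have ha2 : (pt k2).1 = a := (Finset.mem_filter.mp hk2).2
          exact Prod.ext (ha1.trans ha2.symm) hsnd2
        have hBa : B.eval a = 0 := by
          have e1 := hzeros k1 hk1
          have e2 := hzeros k2 hk2
          have : B.eval a * ((pt k1).2 - (pt k2).2) = 0 := by
            linear_combination e1 - e2
          rcases mul_eq_zero.mp this with h | h
          · exact h
          · exact absurd (by linear_combination h) hb12
        have hAa : A.eval a = 0 := by
          have e1 := hzeros k1 hk1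
          rw [hBa, zero_mul, add_zero] at e1
          exact e1
        -- (X - C a)^2 divides P
        have hdvdA : (X - C a) ∣ A := Polynomial.dvd_iff_isRoot.mpr hAa
        have hdvdB : (X - C a) ∣ B := Polynomial.dvd_iff_isRoot.mpr hBa
        have hdvd : (X - C a) ^ 2 ∣ P := by
          rw [hP]
          refine dvd_add (dvd_add ?_ ?_) ?_
          · exact pow_dvd_pow_of_dvd hdvdA 2
          · rw [sq]
            exact mul_dvd_mul hdvdA hdvdB
          · exact Dvd.dvd.mul_left (pow_dvd_pow_of_dvd hdvdB 2) _
        rw [← hc2, Polynomial.count_roots]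
        exact (Polynomial.le_rootMultiplicity_iff hPne).mpr hdvd
  -- combine
  calc Z.card = ∑ a : F, (Z.filter (fun k => (pt k).1 = a)).card := hZcard
    _ ≤ ∑ a : F, P.roots.count a := Finset.sum_le_sum (fun a _ => hfibbound a)
    _ = ∑ a ∈ P.roots.toFinset, P.roots.count a := by
        refine (Finset.sum_subset (Finset.subset_univ _) ?_).symm
        intro a _ ha
        exact Multiset.count_eq_zero.mpr (fun hc => ha (Multiset.mem_toFinset.mpr hc))
    _ = Multiset.card P.roots := Multiset.toFinset_sum_count_eq _
    _ ≤ P.natDegree := Polynomial.card_roots' P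
    _ ≤ mm := hPdeg

end Aux6

section Aux7

variable {q n : ℕ} {F : Type} [Field F] [Fintype F]

def auxPhi {n : ℕ} {F : Type} [Field F] (pt : Fin n → F × F) :
    F[X] × F[X] →ₗ[F] (Fin n → F) where
  toFun AB := fun k => AB.1.eval (pt k).1 + AB.2.eval (pt k).1 * (pt k).2
  map_add' x y := by
    funext k
    simp only [Prod.fst_add, Prod.snd_add, eval_add, Pi.add_apply]
    ring
  map_smul' c x := by
    funext k
    simp only [Prod.smul_fst, Prod.smul_snd, eval_smul, smul_eq_mul, RingHom.id_apply,
      Pi.smul_apply]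
    ring

noncomputable def auxPm (q : ℕ) (F : Type) [Field F] (mm : ℕ) : Submodule F (F[X] × F[X]) :=
  (Polynomial.degreeLT F (mm / 2 + 1)).prod
    (Polynomial.degreeLT F (if q + 1 ≤ mm then (mm - (q + 1)) / 2 + 1 else 0))

def auxN (q mm : ℕ) : ℕ := mm / 2 + 1 + (if q + 1 ≤ mm then (mm - (q + 1)) / 2 + 1 else 0)

lemma aux_mem_Pm {mm : ℕ} {A B : F[X]} :
    (A, B) ∈ auxPm q F mm ↔ A ∈ Polynomial.degreeLT F (mm / 2 + 1) ∧
      B ∈ Polynomial.degreeLT F (if q + 1 ≤ mm then (mm - (q + 1)) / 2 + 1 else 0) := by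
  rw [auxPm, Submodule.mem_prod]

lemma aux_degree_bounds {mm : ℕ} {A B : F[X]} (h : (A, B) ∈ auxPm q F mm) :
    2 * A.natDegree ≤ mm ∧ (B = 0 ∨ q + 1 + 2 * B.natDegree ≤ mm) := by
  rw [aux_mem_Pm, Polynomial.mem_degreeLT, Polynomial.mem_degreeLT] at h
  obtain ⟨hA, hB⟩ := h
  constructor
  · rcases eq_or_ne A 0 with rfl | hA0
    · simp only [natDegree_zero]; omega
    · have : A.natDegree < mm / 2 + 1 :=
        (Polynomial.natDegree_lt_iff_degree_lt hA0).mpr hA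
      omega
  · by_cases hqm : q + 1 ≤ mm
    · rcases eq_or_ne B 0 with rfl | hB0
      · left; rfl
      · right
        rw [if_pos hqm] at hB
        have : B.natDegree < (mm - (q + 1)) / 2 + 1 :=
          (Polynomial.natDegree_lt_iff_degree_lt hB0).mpr hB
        omega
    · left
      rw [if_neg hqm] at hB
      by_contra hB0
      have := Polynomial.zero_le_degree_iff.mpr hB0
      rw [Nat.cast_zero] at hB
      exact absurd (lt_of_le_of_lt this hB) (lt_irrefl _)

lemma aux_span_eq (pt : Fin n → F × F) (mm : ℕ) :
    Submodule.span F
      {v : Fin n → F | ∃ i j : ℕ, j ≤ 1 ∧ 2 * i + (q + 1) * j ≤ mm ∧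
        v = fun k => (pt k).1 ^ i * (pt k).2 ^ j} =
    Submodule.map (auxPhi pt) (auxPm q F mm) := by
  classical
  apply le_antisymm
  · rw [Submodule.span_le]
    rintro v ⟨i, j, hj, hij, rfl⟩
    interval_cases j
    · refine ⟨(X ^ i, 0), ?_, ?_⟩
      · show (X ^ i, (0:F[X])) ∈ auxPm q F mm
        rw [aux_mem_Pm]
        constructor
        · rw [Polynomial.mem_degreeLT, Polynomial.degree_X_pow]
          exact_mod_cast Nat.lt_succ_of_le (by omega)
        · rw [Polynomial.mem_degreeLT, Polynomial.degree_zero]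
          exact bot_lt_iff_ne_bot.mpr (by first | (split <;> simp) | simp)
      · funext k
        simp [auxPhi]
    · refine ⟨(0, X ^ i), ?_, ?_⟩
      · have hqm : q + 1 ≤ mm := by omega
        show ((0:F[X]), X ^ i) ∈ auxPm q F mm
        rw [aux_mem_Pm]
        constructor
        · rw [Polynomial.mem_degreeLT, Polynomial.degree_zero]
          exact bot_lt_iff_ne_bot.mpr (by first | (split <;> simp) | simp)
        · rw [Polynomial.mem_degreeLT, if_pos hqm, Polynomial.degree_X_pow]
          exact_mod_cast Nat.lt_succ_of_le (by omega)
      · funext k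
        simp [auxPhi, pow_one]
  · rintro v ⟨⟨A, B⟩, hmem, rfl⟩
    rw [SetLike.mem_coe, aux_mem_Pm] at hmem
    obtain ⟨hA, hB⟩ := hmem
    have hsplit : auxPhi pt (A, B) = auxPhi pt (A, 0) + auxPhi pt (0, B) := by
      rw [← map_add]
      norm_num
    rw [hsplit]
    apply Submodule.add_mem
    · -- A part
      have h1 : A ∈ Submodule.span F
          ↑((Finset.range (mm / 2 + 1)).image (fun i => (X : F[X]) ^ i)) := by
        rw [← Polynomial.degreeLT_eq_span_X_pow]
        exact hA
      have h2 : auxPhi pt (A, 0) = (auxPhi pt).comp (LinearMap.inl F F[X] F[X]) A := by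
        simp [LinearMap.inl]
      rw [h2]
      have h3 := Submodule.mem_map_of_mem (f := (auxPhi pt).comp (LinearMap.inl F F[X] F[X])) h1
      rw [Submodule.map_span] at h3
      refine Submodule.span_le.mpr ?_ h3
      rintro w ⟨w', hw', rfl⟩
      simp only [Finset.coe_image, Set.mem_image, Finset.mem_coe, Finset.mem_range] at hw'
      obtain ⟨i, hi, rfl⟩ := hw'
      apply Submodule.subset_span
      refine ⟨i, 0, by omega, by omega, ?_⟩
      funext k
      simp [auxPhi, LinearMap.inl]
    · -- B part
      by_cases hqm : q + 1 ≤ mm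
      · rw [if_pos hqm] at hB
        have h1 : B ∈ Submodule.span F
            ↑((Finset.range ((mm - (q + 1)) / 2 + 1)).image (fun i => (X : F[X]) ^ i)) := by
          rw [← Polynomial.degreeLT_eq_span_X_pow]
          exact hB
        have h2 : auxPhi pt (0, B) = (auxPhi pt).comp (LinearMap.inr F F[X] F[X]) B := by
          simp [LinearMap.inr]
        rw [h2]
        have h3 := Submodule.mem_map_of_mem (f := (auxPhi pt).comp (LinearMap.inr F F[X] F[X])) h1
        rw [Submodule.map_span] at h3
        refine Submodule.span_le.mpr ?_ h3
        rintro w ⟨w', hw', rfl⟩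
        simp only [Finset.coe_image, Set.mem_image, Finset.mem_coe, Finset.mem_range] at hw'
        obtain ⟨i, hi, rfl⟩ := hw'
        apply Submodule.subset_span
        refine ⟨i, 1, le_refl 1, by omega, ?_⟩
        funext k
        simp [auxPhi, LinearMap.inr, pow_one]
      · rw [if_neg hqm, Polynomial.mem_degreeLT, Nat.cast_zero] at hB
        have hB0 : B = 0 := by
          by_contra hB0
          have := Polynomial.zero_le_degree_iff.mpr hB0
          exact absurd (lt_of_le_of_lt this hB) (lt_irrefl _)
        rw [hB0]
        have : auxPhi pt ((0 : F[X]), (0 : F[X])) = 0 := by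
          have : ((0 : F[X]), (0 : F[X])) = (0 : F[X] × F[X]) := rfl
          rw [this, map_zero]
        rw [this]
        exact Submodule.zero_mem _

lemma aux_finrank_degreeLT (d : ℕ) : finrank F (Polynomial.degreeLT F d) = d := by
  rw [(Polynomial.degreeLTEquiv F d).finrank_eq, Module.finrank_pi, Fintype.card_fin]

end Aux7

section Aux8

variable {q n : ℕ} {F : Type} [Field F] [Fintype F]

lemma aux_inj [CharP F 2] (hF : Fintype.card F = q ^ 2) (hn : n = 2 * q ^ 2)
    (pt : Fin n → F × F) (hinj : Function.Injective pt)
    (hrange : ∀ p : F × F, p ∈ Set.range pt ↔ p.2 ^ 2 + p.2 = p.1 ^ (q + 1))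
    (hq2 : 2 ≤ q) (hqe : 2 ∣ q) (mm : ℕ) (hmm : mm ≤ 2 * q ^ 2 - 1) :
    ∀ AB ∈ auxPm q F mm, auxPhi pt AB = 0 → AB = 0 := by
  classical
  rintro ⟨A, B⟩ hmem h0
  by_contra hne
  have hAB : ¬(A = 0 ∧ B = 0) := by
    intro ⟨h1, h2⟩
    exact hne (by rw [h1, h2]; rfl)
  obtain ⟨hdA, hdB⟩ := aux_degree_bounds hmem
  have hcount := aux_zerocount hF hn pt hinj hrange hq2 hqe A B mm hAB hdA hdB
  have hall : Finset.univ.filter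
      (fun k : Fin n => A.eval (pt k).1 + B.eval (pt k).1 * (pt k).2 = 0) = Finset.univ := by
    apply Finset.filter_true_of_mem
    intro k _
    exact congrFun h0 k
  rw [hall, Finset.card_univ, Fintype.card_fin] at hcount
  have hq4 : 4 ≤ q ^ 2 := by nlinarith
  omega

lemma aux_finrank_map [CharP F 2] (hF : Fintype.card F = q ^ 2) (hn : n = 2 * q ^ 2)
    (pt : Fin n → F × F) (hinj : Function.Injective pt)
    (hrange : ∀ p : F × F, p ∈ Set.range pt ↔ p.2 ^ 2 + p.2 = p.1 ^ (q + 1))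
    (hq2 : 2 ≤ q) (hqe : 2 ∣ q) (mm : ℕ) (hmm : mm ≤ 2 * q ^ 2 - 1) :
    finrank F (Submodule.map (auxPhi pt) (auxPm q F mm)) = auxN q mm := by
  classical
  set d2 : ℕ := if q + 1 ≤ mm then (mm - (q + 1)) / 2 + 1 else 0 with hd2
  set P1 := Polynomial.degreeLT F (mm / 2 + 1) with hP1
  set P2 := Polynomial.degreeLT F d2 with hP2
  set Ψ : (P1 × P2) →ₗ[F] (Fin n → F) :=
    (auxPhi pt).comp (P1.subtype.prodMap P2.subtype) with hΨ
  have hrangeΨ : LinearMap.range Ψ = Submodule.map (auxPhi pt) (auxPm q F mm) := by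
    rw [hΨ, LinearMap.range_comp]
    congr 1
    ext ⟨x, y⟩
    constructor
    · rintro ⟨⟨a, b⟩, hab⟩
      have heq : ((a : F[X]), (b : F[X])) = (x, y) := hab
      rw [← heq]
      exact ⟨a.2, b.2⟩
    · rintro ⟨hx, hy⟩
      exact ⟨(⟨x, hx⟩, ⟨y, hy⟩), rfl⟩
  have hinjΨ : Function.Injective Ψ := by
    rw [← LinearMap.ker_eq_bot]
    rw [Submodule.eq_bot_iff]
    rintro ⟨a, b⟩ hk
    rw [LinearMap.mem_ker] at hk
    have hmem : ((a : F[X]), (b : F[X])) ∈ auxPm q F mm := ⟨a.2, b.2⟩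
    have h0 : auxPhi pt ((a : F[X]), (b : F[X])) = 0 := hk
    have := aux_inj hF hn pt hinj hrange hq2 hqe mm hmm _ hmem h0
    have ha : (a : F[X]) = 0 := congrArg Prod.fst this
    have hb : (b : F[X]) = 0 := congrArg Prod.snd this
    apply Prod.ext
    · exact Subtype.ext ha
    · exact Subtype.ext hb
  haveI i1 : Module.Finite F P1 := Module.Finite.equiv (Polynomial.degreeLTEquiv F _).symm
  haveI i2 : Module.Finite F P2 := Module.Finite.equiv (Polynomial.degreeLTEquiv F _).symm
  rw [← hrangeΨ, LinearMap.finrank_range_of_inj hinjΨ, Module.finrank_prod, hP1, hP2,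
    aux_finrank_degreeLT, aux_finrank_degreeLT, auxN]

-- the Euclidean dual pairing as a linear map into the dual space
def auxPair {n : ℕ} {F : Type} [Field F] : (Fin n → F) →ₗ[F] Module.Dual F (Fin n → F) :=
  LinearMap.mk₂ F (fun u c => ∑ k, u k * c k)
    (fun u u' c => by simp [add_mul, Finset.sum_add_distrib])
    (fun r u c => by simp [Finset.mul_sum, mul_assoc])
    (fun u c c' => by simp [mul_add, Finset.sum_add_distrib])
    (fun r u c => by
      simp only [Pi.smul_apply, smul_eq_mul, Finset.mul_sum]
      exact Finset.sum_congr rfl (fun k _ => by ring))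

lemma auxPair_apply {n : ℕ} {F : Type} [Field F] (u c : Fin n → F) :
    auxPair u c = ∑ k, u k * c k := rfl

lemma aux_pair_bijective {n : ℕ} {F : Type} [Field F] :
    Function.Bijective (auxPair (n := n) (F := F)) := by
  have hinj : Function.Injective (auxPair (n := n) (F := F)) := by
    rw [← LinearMap.ker_eq_bot, Submodule.eq_bot_iff]
    intro u hu
    rw [LinearMap.mem_ker] at hu
    funext k
    have := congrArg (fun φ => φ (Pi.single k 1)) hu
    simp only [LinearMap.zero_apply] at this
    rw [show (auxPair u) (Pi.single k 1) = ∑ j, u j * (Pi.single k 1 : Fin n → F) j from rfl]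
      at this
    rw [Finset.sum_eq_single k (fun j _ hj => by
        rw [Pi.single_eq_of_ne hj, mul_zero]) (fun h => absurd (Finset.mem_univ k) h)] at this
    rw [Pi.single_eq_same, mul_one] at this
    exact this
  exact ⟨hinj, (LinearMap.injective_iff_surjective_of_finrank_eq_finrank
    (Subspace.dual_finrank_eq (K := F) (V := Fin n → F)).symm).mp hinj⟩

lemma aux_dual_dim {n : ℕ} {F : Type} [Field F] (W : Submodule F (Fin n → F)) :
    finrank F (Submodule.comap (auxPair (n := n) (F := F)) W.dualAnnihilator) + finrank F W = n := by
  classical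
  set E := LinearEquiv.ofBijective _ (aux_pair_bijective (n := n) (F := F)) with hE
  have h0 : Submodule.comap (auxPair (n := n) (F := F)) W.dualAnnihilator =
      Submodule.comap (E : (Fin n → F) →ₗ[F] Module.Dual F (Fin n → F)) W.dualAnnihilator := rfl
  rw [h0, Submodule.comap_equiv_eq_map_symm, LinearEquiv.finrank_map_eq]
  have h1 : finrank F W.dualAnnihilator = finrank F ((Fin n → F) ⧸ W) :=
    (Subspace.quotEquivAnnihilator W).symm.finrank_eq
  rw [h1, Submodule.finrank_quotient_add_finrank, Module.finrank_pi, Fintype.card_fin]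

end Aux8

section Aux9

variable {q n : ℕ} {F : Type} [Field F] [Fintype F]

lemma aux_orth [CharP F 2] (hF : Fintype.card F = q ^ 2) (hn : n = 2 * q ^ 2)
    (pt : Fin n → F × F) (hinj : Function.Injective pt)
    (hrange : ∀ p : F × F, p ∈ Set.range pt ↔ p.2 ^ 2 + p.2 = p.1 ^ (q + 1))
    (hq2 : 2 ≤ q) (mm mm' : ℕ) (hsum : mm + mm' ≤ 2 * q ^ 2 + q - 2)
    (A B : F[X]) (hmem : (A, B) ∈ auxPm q F mm') :
    ∀ c ∈ Submodule.span F
      {v : Fin n → F | ∃ i j : ℕ, j ≤ 1 ∧ 2 * i + (q + 1) * j ≤ mm ∧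
        v = fun k => (pt k).1 ^ i * (pt k).2 ^ j},
      ∑ k, (auxPhi pt (A, B)) k * c k = 0 := by
  classical
  have hq4 : 4 ≤ q ^ 2 := by nlinarith
  have hqq : 2 * q ≤ q ^ 2 := by nlinarith
  obtain ⟨hdA, hdB⟩ := aux_degree_bounds hmem
  intro c hc
  have hker : Submodule.span F
      {v : Fin n → F | ∃ i j : ℕ, j ≤ 1 ∧ 2 * i + (q + 1) * j ≤ mm ∧
        v = fun k => (pt k).1 ^ i * (pt k).2 ^ j} ≤
      LinearMap.ker (auxPair (auxPhi pt (A, B))) := by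
    rw [Submodule.span_le]
    rintro w ⟨i, j, hj, hij, rfl⟩
    rw [SetLike.mem_coe, LinearMap.mem_ker]
    rw [auxPair_apply]
    interval_cases j
    · -- j = 0
      have hsplit : ∑ k, (auxPhi pt (A, B)) k * ((pt k).1 ^ i * (pt k).2 ^ 0) =
          (∑ k, (A * X ^ i).eval (pt k).1) +
          ∑ k, (B * X ^ i).eval (pt k).1 * (pt k).2 := by
        rw [← Finset.sum_add_distrib]
        apply Finset.sum_congr rfl
        intro k _
        show (A.eval (pt k).1 + B.eval (pt k).1 * (pt k).2) * ((pt k).1 ^ i * (pt k).2 ^ 0) = _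
        simp only [eval_mul, eval_pow, eval_X, pow_zero]
        ring
      rw [hsplit, aux_sum_eval0 hF hn pt hinj hrange,
        aux_sum_eval1 hF hn pt hinj hrange, zero_add]
      apply aux_SF hF hq2
      rcases hdB with rfl | hdB'
      · simp only [zero_mul, natDegree_zero]
        omega
      · refine le_trans natDegree_mul_le ?_
        rw [natDegree_X_pow]
        omega
    · -- j = 1
      have hsplit : ∑ k, (auxPhi pt (A, B)) k * ((pt k).1 ^ i * (pt k).2 ^ 1) =
          (∑ k, (A * X ^ i).eval (pt k).1 * (pt k).2) +
          ∑ k, (B * X ^ i).eval (pt k).1 * (pt k).2 ^ 2 := by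
        rw [← Finset.sum_add_distrib]
        apply Finset.sum_congr rfl
        intro k _
        show (A.eval (pt k).1 + B.eval (pt k).1 * (pt k).2) * ((pt k).1 ^ i * (pt k).2 ^ 1) = _
        simp only [eval_mul, eval_pow, eval_X, pow_one]
        ring
      rw [hsplit, aux_sum_eval1 hF hn pt hinj hrange,
        aux_sum_eval2 hF hn pt hinj hrange]
      rw [aux_SF hF hq2 _ ?_, aux_SF hF hq2 _ ?_, add_zero]
      · rcases hdB with rfl | hdB'
        · simp only [zero_mul, natDegree_zero]
          omega
        · refine le_trans natDegree_mul_le ?_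
          rw [natDegree_X_pow]
          omega
      · rcases eq_or_ne A 0 with rfl | hA0
        · simp only [zero_mul, natDegree_zero]
          omega
        · refine le_trans natDegree_mul_le ?_
          rw [natDegree_X_pow]
          omega
  exact hker hc

end Aux9

section Aux10

variable {q n : ℕ} {F : Type} [Field F] [Fintype F]

lemma aux_NN (hq2 : 2 ≤ q) (hqe : 2 ∣ q) (mm : ℕ) (hm1 : q - 1 ≤ mm)
    (hm2 : mm ≤ 2 * q ^ 2 - 1) :
    auxN q mm + auxN q (2 * q ^ 2 + q - 2 - mm) = 2 * q ^ 2 := by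
  have hq4 : 4 ≤ q ^ 2 := by nlinarith
  have hqq : 2 * q ≤ q ^ 2 := by nlinarith
  rw [auxN, auxN]
  by_cases h1 : q + 1 ≤ mm
  · rw [if_pos h1]
    by_cases h2 : q + 1 ≤ 2 * q ^ 2 + q - 2 - mm
    · rw [if_pos h2]; omega
    · rw [if_neg h2]; omega
  · rw [if_neg h1]
    by_cases h2 : q + 1 ≤ 2 * q ^ 2 + q - 2 - mm
    · rw [if_pos h2]; omega
    · rw [if_neg h2]; omega

lemma aux_regime1 [CharP F 2] (hF : Fintype.card F = q ^ 2) (hn : n = 2 * q ^ 2)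
    (pt : Fin n → F × F) (hinj : Function.Injective pt)
    (hrange : ∀ p : F × F, p ∈ Set.range pt ↔ p.2 ^ 2 + p.2 = p.1 ^ (q + 1))
    (hq2 : 2 ≤ q) (hqe : 2 ∣ q) (m : ℕ) (hm : q - 1 ≤ m) (hm' : m ≤ 2 * q ^ 2 - 1)
    (u : Fin n → F)
    (hu : ∀ c ∈ Submodule.span F
      {v : Fin n → F | ∃ i j : ℕ, j ≤ 1 ∧ 2 * i + (q + 1) * j ≤ m ∧
        v = fun k => (pt k).1 ^ i * (pt k).2 ^ j},
      ∑ k, u k * c k = 0) :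
    ∃ A B : F[X], (A, B) ∈ auxPm q F (2 * q ^ 2 + q - 2 - m) ∧ u = auxPhi pt (A, B) := by
  classical
  have hq4 : 4 ≤ q ^ 2 := by nlinarith
  have hqq : 2 * q ≤ q ^ 2 := by nlinarith
  set Cm : Submodule F (Fin n → F) := Submodule.span F
      {v : Fin n → F | ∃ i j : ℕ, j ≤ 1 ∧ 2 * i + (q + 1) * j ≤ m ∧
        v = fun k => (pt k).1 ^ i * (pt k).2 ^ j} with hCm
  set mp : ℕ := 2 * q ^ 2 + q - 2 - m with hmp
  set DS : Submodule F (Fin n → F) :=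
    Submodule.comap (auxPair (n := n) (F := F)) Cm.dualAnnihilator with hDS
  have hle : Submodule.map (auxPhi pt) (auxPm q F mp) ≤ DS := by
    rintro w ⟨⟨A, B⟩, hmem, rfl⟩
    rw [hDS, Submodule.mem_comap, Submodule.mem_dualAnnihilator]
    intro c hc
    rw [auxPair_apply]
    exact aux_orth hF hn pt hinj hrange hq2 m mp (by omega) A B
      (by rwa [SetLike.mem_coe] at hmem) c hc
  have hfr1 : finrank F DS + finrank F Cm = n := aux_dual_dim Cm
  have hfr2 : finrank F Cm = auxN q m := by
    rw [hCm, aux_span_eq pt m]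
    exact aux_finrank_map hF hn pt hinj hrange hq2 hqe m (by omega)
  have hfr3 : finrank F (Submodule.map (auxPhi pt) (auxPm q F mp)) = auxN q mp :=
    aux_finrank_map hF hn pt hinj hrange hq2 hqe mp (by omega)
  have hNN := aux_NN hq2 hqe m hm hm'
  rw [← hmp] at hNN
  have heq : Submodule.map (auxPhi pt) (auxPm q F mp) = DS := by
    apply Submodule.eq_of_le_of_finrank_le hle
    rw [hfr3]
    omega
  have huDS : u ∈ DS := by
    rw [hDS, Submodule.mem_comap, Submodule.mem_dualAnnihilator]
    intro c hc
    rw [auxPair_apply]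
    exact hu c hc
  rw [← heq] at huDS
  obtain ⟨⟨A, B⟩, hmem, hval⟩ := huDS
  exact ⟨A, B, by rwa [SetLike.mem_coe] at hmem, hval.symm⟩

lemma aux_coeff_kill [CharP F 2] (hF : Fintype.card F = q ^ 2) (hn : n = 2 * q ^ 2)
    (pt : Fin n → F × F) (hinj : Function.Injective pt)
    (hrange : ∀ p : F × F, p ∈ Set.range pt ↔ p.2 ^ 2 + p.2 = p.1 ^ (q + 1))
    (hq2 : 2 ≤ q) (A : F[X]) (hdeg : 2 * A.natDegree ≤ q - 1) (j : ℕ) (hj : j ≤ A.natDegree)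
    (horth : ∑ k, A.eval (pt k).1 * ((pt k).1 ^ (q ^ 2 - 1 - j) * (pt k).2) = 0) :
    A.coeff j = 0 := by
  classical
  have hq4 : 4 ≤ q ^ 2 := by nlinarith
  have hqq : 2 * q ≤ q ^ 2 := by nlinarith
  set i : ℕ := q ^ 2 - 1 - j with hi
  have hstep : ∑ k, A.eval (pt k).1 * ((pt k).1 ^ i * (pt k).2) =
      ∑ k, (A * X ^ i).eval (pt k).1 * (pt k).2 := by
    apply Finset.sum_congr rfl
    intro k _
    simp only [eval_mul, eval_pow, eval_X]
    ring
  rw [hstep, aux_sum_eval1 hF hn pt hinj hrange] at horth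
  have hexp : ∀ a : F, (A * X ^ i).eval a =
      ∑ j' ∈ Finset.range (A.natDegree + 1), A.coeff j' * a ^ (j' + i) := by
    intro a
    rw [eval_mul, eval_pow, eval_X, Polynomial.eval_eq_sum_range, Finset.sum_mul]
    exact Finset.sum_congr rfl (fun j' _ => by rw [pow_add]; ring)
  rw [Finset.sum_congr rfl (fun a _ => hexp a), Finset.sum_comm] at horth
  have hsp : ∀ j' ∈ Finset.range (A.natDegree + 1),
      (∑ a : F, A.coeff j' * a ^ (j' + i)) =
        if j' = j then A.coeff j else 0 := by
    intro j' hj'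
    rw [Finset.mem_range] at hj'
    have hj'q : j' ≤ (q - 1) / 2 := by omega
    rw [← Finset.mul_sum]
    rcases lt_trichotomy j' j with hlt | heq | hgt
    · rw [if_neg (by omega)]
      rw [aux_sp_small hF (j' + i) (by omega), mul_zero]
    · rw [if_pos heq, heq]
      have : j + i = q ^ 2 - 1 := by omega
      rw [this, aux_sp_q hF hq2, mul_one]
    · rw [if_neg (by omega)]
      rw [aux_sp_mid hF hq2 (j' + i) (by omega) (by omega), mul_zero]
  rw [Finset.sum_congr rfl hsp, Finset.sum_ite_eq' (Finset.range (A.natDegree + 1)) j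
    (fun _ => A.coeff j), if_pos (Finset.mem_range.mpr (by omega))] at horth
  exact horth

end Aux10

section Aux11

variable {q n : ℕ} {F : Type} [Field F] [Fintype F]

lemma aux_weight [CharP F 2] (hF : Fintype.card F = q ^ 2) (hn : n = 2 * q ^ 2)
    (pt : Fin n → F × F) (hinj : Function.Injective pt)
    (hrange : ∀ p : F × F, p ∈ Set.range pt ↔ p.2 ^ 2 + p.2 = p.1 ^ (q + 1))
    (hq2 : 2 ≤ q) (hqe : 2 ∣ q) (m t : ℕ) (ht : t + m ≤ 2 * q ^ 2 + q - 2)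
    (hm : q - 1 ≤ m) (A B : F[X]) (hAB : ¬(A = 0 ∧ B = 0))
    (hdA : 2 * A.natDegree ≤ t) (hdB : B = 0 ∨ q + 1 + 2 * B.natDegree ≤ t)
    (v : Fin n → F)
    (hsupp : ∀ k, v k ≠ 0 ↔ A.eval (pt k).1 + B.eval (pt k).1 * (pt k).2 ≠ 0) :
    m + 2 - q ≤ Nat.card {k : Fin n // v k ≠ 0} := by
  classical
  have hq4 : 4 ≤ q ^ 2 := by nlinarith
  have hqq : 2 * q ≤ q ^ 2 := by nlinarith
  have hzc := aux_zerocount hF hn pt hinj hrange hq2 hqe A B t hAB hdA hdB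
  have hcard : Nat.card {k : Fin n // v k ≠ 0} =
      (Finset.univ.filter (fun k : Fin n => v k ≠ 0)).card := by
    rw [Nat.card_eq_fintype_card, Fintype.card_subtype]
  have hset : Finset.univ.filter (fun k : Fin n => v k ≠ 0) =
      Finset.univ.filter
        (fun k : Fin n => ¬(A.eval (pt k).1 + B.eval (pt k).1 * (pt k).2 = 0)) := by
    apply Finset.filter_congr
    intro k _
    rw [hsupp k]
  have hsplit := Finset.card_filter_add_card_filter_not
    (s := (Finset.univ : Finset (Fin n)))
    (p := fun k : Fin n => A.eval (pt k).1 + B.eval (pt k).1 * (pt k).2 = 0)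
  rw [Finset.card_univ, Fintype.card_fin] at hsplit
  rw [hcard, hset]
  omega

end Aux11

theorem first_curve_hermitian_dual_distance (s : ℕ) (hs : 0 < s) (q : ℕ) (hq : q = 2 ^ s)
    (F : Type) [Field F] [Fintype F] (hF : Fintype.card F = q ^ 2)
    (n : ℕ) (hn : n = 2 * q ^ 2)
    (pt : Fin n → F × F) (hinj : Function.Injective pt)
    (hrange : ∀ p : F × F, p ∈ Set.range pt ↔ p.2 ^ 2 + p.2 = p.1 ^ (q + 1))
    (C : ℕ → Submodule F (Fin n → F))
    (hC : ∀ m : ℕ, C m = Submodule.span F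
      {v : Fin n → F | ∃ i j : ℕ, j ≤ 1 ∧ 2 * i + (q + 1) * j ≤ m ∧
        v = fun k => (pt k).1 ^ i * (pt k).2 ^ j})
    (m : ℕ) (hm : q - 1 ≤ m) :
    ∀ v ∈ {v : Fin n → F | ∀ c ∈ C m, ∑ k, v k * (c k) ^ q = 0}, v ≠ 0 →
      m + 2 - q ≤ Nat.card {k : Fin n // v k ≠ 0} := by
  intro v hv hvne
  classical
  haveI hchar : CharP F 2 := aux_char2 hs hq hF
  haveI : Fact (Nat.Prime 2) := ⟨Nat.prime_two⟩
  have hq2 : 2 ≤ q := by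
    rw [hq]
    calc 2 = 2 ^ 1 := (pow_one 2).symm
      _ ≤ 2 ^ s := Nat.pow_le_pow_right (by norm_num) hs
  have hqe : 2 ∣ q := by rw [hq]; exact dvd_pow_self 2 hs.ne'
  have hq4 : 4 ≤ q ^ 2 := by nlinarith
  have hqq : 2 * q ≤ q ^ 2 := by nlinarith
  have hq0 : q ≠ 0 := by omega
  -- the Frobenius x ↦ x ^ q
  set φ : F →+* F := iterateFrobenius F 2 s with hφ
  have hφdef : ∀ x : F, φ x = x ^ q := by
    intro x
    rw [hφ, iterateFrobenius_def, hq]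
  set u : Fin n → F := fun k => (v k) ^ q with hu
  have hu_dual : ∀ c ∈ C m, ∑ k, u k * c k = 0 := by
    intro c hc
    have h1 : ∑ k, v k * (c k) ^ q = 0 := hv c hc
    have h2 := congrArg φ h1
    rw [map_sum, map_zero] at h2
    rw [← h2]
    apply Finset.sum_congr rfl
    intro k _
    rw [map_mul, hφdef (v k), hφdef ((c k) ^ q), ← pow_mul]
    have hqsq : q * q = q ^ 2 := (sq q).symm
    rw [hqsq, ← hF, FiniteField.pow_card]
  have hune : u ≠ 0 := by
    obtain ⟨k, hk⟩ := Function.ne_iff.mp hvne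
    intro hcon
    have : u k = 0 := congrFun hcon k
    rw [hu] at this
    exact hk (pow_eq_zero_iff hq0 |>.mp this)
  have hsupp : ∀ k, v k ≠ 0 ↔ u k ≠ 0 := by
    intro k
    rw [hu]
    simp only [ne_eq, pow_eq_zero_iff hq0]
  rcases Nat.lt_or_ge (2 * q ^ 2 - 1) m with hbig | hsmall
  · -- Regime 2 : m ≥ 2 q² 
    have hm0 : q - 1 ≤ 2 * q ^ 2 - 1 := by omega
    have hu0 : ∀ c ∈ Submodule.span F
        {w : Fin n → F | ∃ i j : ℕ, j ≤ 1 ∧ 2 * i + (q + 1) * j ≤ 2 * q ^ 2 - 1 ∧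
          w = fun k => (pt k).1 ^ i * (pt k).2 ^ j}, ∑ k, u k * c k = 0 := by
      intro c hc
      apply hu_dual
      rw [hC m]
      refine Submodule.span_mono ?_ hc
      rintro w ⟨i, j, hj, hij, rfl⟩
      exact ⟨i, j, hj, by omega, rfl⟩
    obtain ⟨A, B, hmem, hval⟩ := aux_regime1 hF hn pt hinj hrange hq2 hqe
      (2 * q ^ 2 - 1) hm0 (le_refl _) u hu0
    obtain ⟨hdA, hdB⟩ := aux_degree_bounds hmem
    have hmp : 2 * q ^ 2 + q - 2 - (2 * q ^ 2 - 1) = q - 1 := by omega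
    rw [hmp] at hdA hdB
    have hB0 : B = 0 := by
      rcases hdB with h | h
      · exact h
      · omega
    subst hB0
    have huk : ∀ k, u k = A.eval (pt k).1 := by
      intro k
      have := congrFun hval k
      rw [this]
      show A.eval (pt k).1 + Polynomial.eval (pt k).1 0 * (pt k).2 = _
      rw [eval_zero, zero_mul, add_zero]
    have hAne : A ≠ 0 := by
      intro hA0
      apply hune
      funext k
      rw [huk k, hA0, eval_zero, Pi.zero_apply]
    -- coefficient killing
    have hkill : ∀ j : ℕ, 2 * q ^ 2 + q - 2 < 2 * j + m → A.coeff j = 0 := by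
      intro j hjm
      rcases Nat.lt_or_ge A.natDegree j with hjd | hjd
      · exact coeff_eq_zero_of_natDegree_lt hjd
      · apply aux_coeff_kill hF hn pt hinj hrange hq2 A hdA j hjd
        have hcm : (fun k : Fin n => (pt k).1 ^ (q ^ 2 - 1 - j) * (pt k).2 ^ (1 : ℕ)) ∈ C m := by
          rw [hC m]
          apply Submodule.subset_span
          exact ⟨q ^ 2 - 1 - j, 1, le_refl 1, by omega, rfl⟩
        have h0 := hu_dual _ hcm
        rw [← h0]
        apply Finset.sum_congr rfl
        intro k _
        rw [huk k, pow_one]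
    by_cases hmM : 2 * q ^ 2 + q - 2 < m
    · exfalso
      apply hAne
      ext j
      rw [coeff_zero]
      exact hkill j (by omega)
    · push_neg at hmM
      have hdA' : 2 * A.natDegree + m ≤ 2 * q ^ 2 + q - 2 := by
        by_contra hcon
        push_neg at hcon
        exact hAne (Polynomial.leadingCoeff_eq_zero.mp (hkill A.natDegree (by omega)))
      refine aux_weight hF hn pt hinj hrange hq2 hqe m (2 * q ^ 2 + q - 2 - m)
        (by omega) hm A 0 (fun h => hAne h.1) (by omega) (Or.inl rfl) v ?_
      intro k
      rw [hsupp k, huk k, eval_zero, zero_mul, add_zero]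
  · -- Regime 1 : m ≤ 2 q² - 1
    have hu0 : ∀ c ∈ Submodule.span F
        {w : Fin n → F | ∃ i j : ℕ, j ≤ 1 ∧ 2 * i + (q + 1) * j ≤ m ∧
          w = fun k => (pt k).1 ^ i * (pt k).2 ^ j}, ∑ k, u k * c k = 0 := by
      intro c hc
      apply hu_dual
      rw [hC m]
      exact hc
    obtain ⟨A, B, hmem, hval⟩ := aux_regime1 hF hn pt hinj hrange hq2 hqe
      m hm hsmall u hu0
    obtain ⟨hdA, hdB⟩ := aux_degree_bounds hmem
    have hAB : ¬(A = 0 ∧ B = 0) := by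
      rintro ⟨rfl, rfl⟩
      apply hune
      rw [hval]
      have : ((0 : F[X]), (0 : F[X])) = (0 : F[X] × F[X]) := rfl
      rw [this, map_zero]
    refine aux_weight hF hn pt hinj hrange hq2 hqe m (2 * q ^ 2 + q - 2 - m)
      (by omega) hm A B hAB hdA hdB v ?_
    intro k
    rw [hsupp k]
    have := congrFun hval k
    rw [this]
    rfl
end

section
/- Let q = 2^s, F = 𝔽_{q²}, n = 2q², and let (a₁,b₁),…,(a_n,b_n) be an enumeration of all pairs in F × F with b_k² + b_k = a_k^{q+1}. For a nonnegative integer m let C_m ⊆ F^n be the F-linear span of the vectors ((a_k)^i (b_k)^j)_{k=1,…,n} over all pairs (i,j) of nonnegative integers with j ≤ 1 and 2i + (q+1)j ≤ m. For every integer m with q − 1 ≤ m ≤ 2q − 2, the code C_m satisfies simultaneously: (a) C_m ⊆ C_m^{⊥H}; (b) dim_F C_m = m − q/2 + 1; and (c) every nonzero vector of C_m^{⊥H} has Hamming weight at least m − q + 2. (Via the stabilizer construction this yields a q-ary quantum code with parameters [[2q², 2q² − 2m + q − 2, ≥ m + 2 − q]].) -/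
/-!
Write a word of `C_M` as `f₀(x) + f₁(x) y` with `2 deg f₀ ≤ M` and `2 deg f₁ + q + 1 ≤ M`
(`x` and `y` have pole orders `2` and `q + 1` at infinity). In characteristic `2` the points above
`a ∈ F` are `(a, β)` and `(a, β + 1)`, so the coordinate sum of such a word is `∑ₐ f₁(a)`, which
vanishes as soon as `M ≤ 2q² + q - 2`. Since `y² = y + x^(q+1)` on the curve, `C_M C_M' ⊆ C_(M+M')`.
Hence `C_m^q ⊆ C_(qm)` is orthogonal to `C_m` because `(q + 1) m ≤ 2q² + q - 2`, and
`C_(2q² + q - 2 - m)` is the Euclidean dual of `C_m`: evaluation is injective for these degrees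
(all below `q²`), so the two dimensions add up to `2q²`. The Hermitian dual is the image of the
Euclidean one under `v ↦ v^q`. Finally the values of a nonzero word at the two points above `a`
multiply to `N(a)`, where `N = f₀² + f₀ f₁ + f₁² x^(q+1)` is nonzero of degree `≤ M`, and a double
zero above `a` makes `a` a double root of `N`; so the word has at most `M` zeros.
-/

open Polynomial Finset

section CharTwo

variable {F : Type*} [Field F] [CharP F 2]

theorem eq_or_eq_add_one_of_sq_add_self_eq {b b' : F} (h : b' ^ 2 + b' = b ^ 2 + b) :
    b' = b ∨ b' = b + 1 := by
  have hfac : (b' - b) * (b' - (b + 1)) = 0 := by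
    linear_combination h + (b ^ 2 - b * b' + b - b') * CharTwo.two_eq_zero (R := F)
  rcases mul_eq_zero.1 hfac with h | h
  · exact .inl (sub_eq_zero.1 h)
  · exact .inr (sub_eq_zero.1 h)

theorem add_one_sq_add_add_one (b : F) : (b + 1) ^ 2 + (b + 1) = b ^ 2 + b := by
  linear_combination (b + 1) * CharTwo.two_eq_zero (R := F)

variable [Fintype F] [DecidableEq F]

theorem filter_sq_add_self_eq {β c : F} (hβ : β ^ 2 + β = c) :
    ({b | b ^ 2 + b = c} : Finset F) = {β, β + 1} := by
  ext b
  simp only [mem_filter, mem_univ, true_and, mem_insert, mem_singleton]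
  refine ⟨fun hb => eq_or_eq_add_one_of_sq_add_self_eq (hb.trans hβ.symm), ?_⟩
  rintro (rfl | rfl)
  · exact hβ
  · rwa [add_one_sq_add_add_one]

theorem card_filter_sq_add_self_eq_le_two (c : F) : #{b | b ^ 2 + b = c} ≤ 2 := by
  obtain ⟨β, hβ⟩ | hempty := ({b | b ^ 2 + b = c} : Finset F).eq_empty_or_nonempty.symm
  · rw [filter_sq_add_self_eq (mem_filter.1 hβ).2]
    exact card_le_two
  · simp [hempty]

end CharTwo

structure IsCurveEnumeration {F : Type*} [Field F] [Fintype F] {ι : Type*} [Fintype ι]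
    (q : ℕ) (pt : ι → F × F) : Prop where
  injective : Function.Injective pt
  mem_range_iff : ∀ p : F × F, p ∈ Set.range pt ↔ p.2 ^ 2 + p.2 = p.1 ^ (q + 1)
  card_eq : Fintype.card ι = 2 * Fintype.card F

namespace IsCurveEnumeration

variable {F : Type*} [Field F] [Fintype F] {ι : Type*} [Fintype ι] {q : ℕ} {pt : ι → F × F}

theorem curve_eq (h : IsCurveEnumeration q pt) (k : ι) :
    (pt k).2 ^ 2 + (pt k).2 = (pt k).1 ^ (q + 1) :=
  (h.mem_range_iff _).1 ⟨k, rfl⟩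

theorem sum_comp_eq_sum_sum [DecidableEq F] (h : IsCurveEnumeration q pt) {M : Type*}
    [AddCommMonoid M] (g : F × F → M) :
    ∑ k, g (pt k) = ∑ a, ∑ b with b ^ 2 + b = a ^ (q + 1), g (a, b) := by
  have himage : univ.image pt = ({p | p.2 ^ 2 + p.2 = p.1 ^ (q + 1)} : Finset (F × F)) := by
    ext p
    simpa using h.mem_range_iff p
  rw [← sum_image h.injective.injOn, himage, sum_filter, Fintype.sum_prod_type]
  simp only [sum_filter]

variable [CharP F 2]

/-- Every fibre of `x` has at most two points and there are `2 |F|` points, so none is empty. -/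
theorem exists_root (h : IsCurveEnumeration q pt) :
    ∃ β : F → F, ∀ a, β a ^ 2 + β a = a ^ (q + 1) := by
  classical
  have hsum : ∑ a : F, #{b | b ^ 2 + b = a ^ (q + 1)} = ∑ _a : F, 2 := by
    have hcount := h.sum_comp_eq_sum_sum fun _ => 1
    simp only [sum_const, card_univ, smul_eq_mul, mul_one, h.card_eq] at hcount
    rw [← hcount, sum_const, card_univ, smul_eq_mul, mul_comm]
  have hfiber := (sum_eq_sum_iff_of_le fun a _ => card_filter_sq_add_self_eq_le_two _).1 hsum
  choose β hβ using fun a => card_pos.1 (by rw [hfiber a (mem_univ a)]; norm_num)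
  exact ⟨β, fun a => (mem_filter.1 (hβ a)).2⟩

theorem sum_comp_eq (h : IsCurveEnumeration q pt) {β : F → F}
    (hβ : ∀ a, β a ^ 2 + β a = a ^ (q + 1)) {M : Type*} [AddCommMonoid M] (g : F × F → M) :
    ∑ k, g (pt k) = ∑ a, (g (a, β a) + g (a, β a + 1)) := by
  classical
  rw [h.sum_comp_eq_sum_sum]
  refine sum_congr rfl fun a _ => ?_
  rw [filter_sq_add_self_eq (hβ a), sum_pair]
  simp

end IsCurveEnumeration

section Code

variable {F : Type*} [Field F] {ι : Type*} {pt : ι → F × F} {q : ℕ}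

def code (pt : ι → F × F) (q M : ℕ) : Submodule F (ι → F) :=
  Submodule.span F {v | ∃ i j : ℕ, j ≤ 1 ∧ 2 * i + (q + 1) * j ≤ M ∧
    v = fun k => (pt k).1 ^ i * (pt k).2 ^ j}

theorem monomial_mem_code {M i j : ℕ} (hj : j ≤ 1) (hij : 2 * i + (q + 1) * j ≤ M) :
    (fun k => (pt k).1 ^ i * (pt k).2 ^ j) ∈ code pt q M :=
  Submodule.subset_span ⟨i, j, hj, hij, rfl⟩

theorem one_mem_code : (1 : ι → F) ∈ code pt q 0 := by
  simpa [Pi.one_def] using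
    monomial_mem_code (pt := pt) (q := q) (M := 0) (i := 0) (j := 0) zero_le_one le_rfl

variable [CharP F 2]

theorem monomial_mul_monomial_mem_code
    (hcurve : ∀ k, (pt k).2 ^ 2 + (pt k).2 = (pt k).1 ^ (q + 1)) {M M' i j i' j' : ℕ}
    (hj : j ≤ 1) (hij : 2 * i + (q + 1) * j ≤ M) (hj' : j' ≤ 1)
    (hij' : 2 * i' + (q + 1) * j' ≤ M') :
    ((fun k => (pt k).1 ^ i * (pt k).2 ^ j) * fun k => (pt k).1 ^ i' * (pt k).2 ^ j') ∈
      code pt q (M + M') := by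
  rcases (show j + j' ≤ 1 ∨ j = 1 ∧ j' = 1 by omega) with hle | ⟨rfl, rfl⟩
  · convert monomial_mem_code (pt := pt) (q := q) (M := M + M') (i := i + i') hle
      (by linarith) using 1
    ext k
    simp only [Pi.mul_apply]
    ring
  · have hsplit :
        ((fun k => (pt k).1 ^ i * (pt k).2 ^ 1) * fun k => (pt k).1 ^ i' * (pt k).2 ^ 1) =
          (fun k => (pt k).1 ^ (i + i') * (pt k).2 ^ 1) +
            fun k => (pt k).1 ^ (i + i' + (q + 1)) * (pt k).2 ^ 0 := by
      ext k
      simp only [Pi.mul_apply, Pi.add_apply]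
      linear_combination (pt k).1 ^ (i + i') * hcurve k
        - (pt k).1 ^ (i + i') * (pt k).2 * CharTwo.two_eq_zero (R := F)
    rw [hsplit]
    exact add_mem (monomial_mem_code le_rfl (by omega)) (monomial_mem_code zero_le_one (by omega))

theorem mul_mem_code (hcurve : ∀ k, (pt k).2 ^ 2 + (pt k).2 = (pt k).1 ^ (q + 1))
    {M M' : ℕ} {u v : ι → F} (hu : u ∈ code pt q M) (hv : v ∈ code pt q M') :
    u * v ∈ code pt q (M + M') := by
  have hle : code pt q M * code pt q M' ≤ code pt q (M + M') := by
    rw [code, code, Submodule.span_mul_span, Submodule.span_le]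
    rintro _ ⟨_, ⟨i, j, hj, hij, rfl⟩, _, ⟨i', j', hj', hij', rfl⟩, rfl⟩
    exact monomial_mul_monomial_mem_code hcurve hj hij hj' hij'
  exact hle (Submodule.mul_mem_mul hu hv)

theorem pow_mem_code (hcurve : ∀ k, (pt k).2 ^ 2 + (pt k).2 = (pt k).1 ^ (q + 1))
    {M : ℕ} {v : ι → F} (hv : v ∈ code pt q M) (n : ℕ) : v ^ n ∈ code pt q (n * M) := by
  induction n with
  | zero => simpa using one_mem_code
  | succ n ih => simpa [pow_succ, add_one_mul] using mul_mem_code hcurve ih hv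

theorem IsCurveEnumeration.sum_eq_zero_of_mem_code [Fintype F] [Fintype ι]
    (h : IsCurveEnumeration q pt) {M : ℕ} (hM : M ≤ 2 * Fintype.card F + q - 2)
    {v : ι → F} (hv : v ∈ code pt q M) : ∑ k, v k = 0 := by
  obtain ⟨β, hβ⟩ := h.exists_root
  induction hv using Submodule.span_induction with
  | mem v hv =>
    obtain ⟨i, j, hj, hij, rfl⟩ := hv
    rw [h.sum_comp_eq hβ fun p => p.1 ^ i * p.2 ^ j]
    interval_cases j
    · simp [CharTwo.add_self_eq_zero]
    · refine (sum_congr rfl fun a _ => ?_).trans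
        (FiniteField.sum_pow_lt_card_sub_one (K := F) i (by omega))
      linear_combination (a ^ i * β a) * CharTwo.two_eq_zero (R := F)
  | zero => simp
  | add u v _ _ hu hv => simp [sum_add_distrib, hu, hv]
  | smul c v _ hv => simp [← mul_sum, hv]

end Code

theorem Polynomial.natDegree_lt_of_mem_degreeLT {R : Type*} [Semiring R] {n : ℕ} {f : R[X]}
    (hf : f ∈ degreeLT R n) (hn : 0 < n) : f.natDegree < n := by
  rcases eq_or_ne f 0 with rfl | hf0
  · simpa using hn
  · exact (natDegree_lt_iff_degree_lt hf0).2 (mem_degreeLT.1 hf)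

theorem Polynomial.X_pow_mem_degreeLT {R : Type*} [Semiring R] [Nontrivial R] {n i : ℕ}
    (hi : i < n) : (X ^ i : R[X]) ∈ degreeLT R n := by
  rw [mem_degreeLT, degree_X_pow]
  exact_mod_cast hi

section Coordinates

variable {F : Type*} [Field F] {ι : Type*} {pt : ι → F × F} {q : ℕ}

@[simps]
noncomputable def evalPair (pt : ι → F × F) : F[X] × F[X] →ₗ[F] ι → F where
  toFun f k := f.1.eval (pt k).1 + f.2.eval (pt k).1 * (pt k).2
  map_add' f g := by
    ext k
    simp only [Prod.fst_add, Prod.snd_add, eval_add, Pi.add_apply]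
    ring
  map_smul' c f := by
    ext k
    simp only [Prod.smul_fst, Prod.smul_snd, eval_smul, smul_eq_mul, Pi.smul_apply,
      RingHom.id_apply]
    ring

noncomputable def codeMap (pt : ι → F × F) (q M : ℕ) :
    degreeLT F (M / 2 + 1) × degreeLT F ((M + 1 - q) / 2) →ₗ[F] ι → F :=
  evalPair pt ∘ₗ (degreeLT F _).subtype.prodMap (degreeLT F _).subtype

theorem codeMap_apply {M : ℕ} (f : degreeLT F (M / 2 + 1) × degreeLT F ((M + 1 - q) / 2)) :
    codeMap pt q M f = evalPair pt ((f.1 : F[X]), (f.2 : F[X])) := rfl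

theorem range_codeMap (M : ℕ) : LinearMap.range (codeMap pt q M) = code pt q M := by
  classical
  apply le_antisymm
  · have h₀ : degreeLT F (M / 2 + 1) ≤
        (code pt q M).comap (evalPair pt ∘ₗ LinearMap.inl F _ _) := by
      rw [degreeLT_eq_span_X_pow, Submodule.span_le]
      intro p hp
      obtain ⟨i, hi, rfl⟩ := by simpa using hp
      rw [SetLike.mem_coe, Submodule.mem_comap]
      convert monomial_mem_code (pt := pt) (q := q) (M := M) (i := i) (j := 0) zero_le_one
        (by omega) using 1
      ext k
      simp
    have h₁ : degreeLT F ((M + 1 - q) / 2) ≤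
        (code pt q M).comap (evalPair pt ∘ₗ LinearMap.inr F _ _) := by
      rw [degreeLT_eq_span_X_pow, Submodule.span_le]
      intro p hp
      obtain ⟨i, hi, rfl⟩ := by simpa using hp
      rw [SetLike.mem_coe, Submodule.mem_comap]
      convert monomial_mem_code (pt := pt) (q := q) (M := M) (i := i) (j := 1) le_rfl
        (by omega) using 1
      ext k
      simp
    rintro _ ⟨⟨⟨f₀, hf₀⟩, f₁, hf₁⟩, rfl⟩
    have hsplit : codeMap pt q M ⟨⟨f₀, hf₀⟩, f₁, hf₁⟩ =
        evalPair pt (f₀, 0) + evalPair pt (0, f₁) := by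
      rw [codeMap_apply, ← map_add, Prod.mk_add_mk, add_zero, zero_add]
    rw [hsplit]
    exact add_mem (h₀ hf₀) (h₁ hf₁)
  · rw [code, Submodule.span_le]
    rintro _ ⟨i, j, hj, hij, rfl⟩
    interval_cases j
    · refine ⟨⟨⟨X ^ i, X_pow_mem_degreeLT (by omega)⟩, 0⟩, ?_⟩
      ext k
      simp [codeMap_apply]
    · refine ⟨⟨0, ⟨X ^ i, X_pow_mem_degreeLT (by omega)⟩⟩, ?_⟩
      ext k
      simp [codeMap_apply]

end Coordinates

namespace IsCurveEnumeration

variable {F : Type*} [Field F] [Fintype F] [CharP F 2] {ι : Type*} [Fintype ι]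
  {pt : ι → F × F} {q : ℕ}

theorem injective_codeMap (h : IsCurveEnumeration q pt) {M : ℕ}
    (hM : M < 2 * Fintype.card F) : Function.Injective (codeMap pt q M) := by
  obtain ⟨β, hβ⟩ := h.exists_root
  rw [← LinearMap.ker_eq_bot, LinearMap.ker_eq_bot']
  rintro ⟨⟨f₀, hf₀⟩, f₁, hf₁⟩ hzero
  have hvanish : ∀ a b, b ^ 2 + b = a ^ (q + 1) → f₀.eval a + f₁.eval a * b = 0 := by
    intro a b hb
    obtain ⟨k, hk⟩ := (h.mem_range_iff (a, b)).2 hb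
    simpa [codeMap_apply, hk] using congrFun hzero k
  have hlt : ∀ {d} {f : F[X]}, f ∈ degreeLT F d → d ≤ Fintype.card F →
      f.natDegree < Fintype.card F := fun hf hd =>
    natDegree_lt_of_mem_degreeLT (degreeLT_mono hd hf) Fintype.card_pos
  have h₁ : f₁ = 0 := by
    refine eq_zero_of_natDegree_lt_card_of_eval_eq_zero f₁ Function.injective_id (fun a => ?_)
      (hlt hf₁ (by omega))
    show f₁.eval a = 0
    linear_combination hvanish a (β a + 1) ((add_one_sq_add_add_one _).trans (hβ a))
      - hvanish a (β a) (hβ a)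
  have h₀ : f₀ = 0 := by
    refine eq_zero_of_natDegree_lt_card_of_eval_eq_zero f₀ Function.injective_id (fun a => ?_)
      (hlt hf₀ (by omega))
    simpa [h₁] using hvanish a (β a) (hβ a)
  subst h₀ h₁
  rfl

theorem finrank_code (h : IsCurveEnumeration q pt) (hq : Even q) {M : ℕ} (hM₁ : q - 1 ≤ M)
    (hM₂ : M < 2 * Fintype.card F) : Module.finrank F (code pt q M) = M - q / 2 + 1 := by
  rw [← range_codeMap, LinearMap.finrank_range_of_inj (h.injective_codeMap hM₂),
    Module.finrank_prod, (degreeLTEquiv F _).finrank_eq, (degreeLTEquiv F _).finrank_eq,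
    Module.finrank_fin_fun, Module.finrank_fin_fun]
  obtain ⟨t, rfl⟩ := hq
  omega

end IsCurveEnumeration

section Norm

variable {F : Type*} [Field F] {q : ℕ}

/-- The norm of `f₀ + f₁ y` from the function field of the curve down to `F(x)`. -/
noncomputable def curveNorm (q : ℕ) (f₀ f₁ : F[X]) : F[X] :=
  f₀ ^ 2 + f₀ * f₁ + f₁ ^ 2 * X ^ (q + 1)

theorem eval_curveNorm [CharP F 2] {a b : F} (hb : b ^ 2 + b = a ^ (q + 1)) (f₀ f₁ : F[X]) :
    (curveNorm q f₀ f₁).eval a =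
      (f₀.eval a + f₁.eval a * b) * (f₀.eval a + f₁.eval a * (b + 1)) := by
  simp only [curveNorm, eval_add, eval_mul, eval_pow, eval_X]
  linear_combination (-(f₁.eval a) ^ 2) * hb
    - f₀.eval a * f₁.eval a * b * CharTwo.two_eq_zero (R := F)

/-- `f₁² x^(q+1)` has odd degree, which `f₀ (f₀ + f₁)` cannot cancel. -/
theorem curveNorm_ne_zero (hq : Even q) {f₀ f₁ : F[X]} (hf : (f₀, f₁) ≠ 0) :
    curveNorm q f₀ f₁ ≠ 0 := by
  rcases eq_or_ne f₁ 0 with rfl | hf₁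
  · have hf₀ : f₀ ≠ 0 := fun h => hf (by simp [h])
    simpa [curveNorm] using hf₀
  intro hN
  unfold curveNorm at hN
  have hdeg : (f₀ * (f₀ + f₁)).natDegree = 2 * f₁.natDegree + (q + 1) := by
    rw [show f₀ * (f₀ + f₁) = -(f₁ ^ 2 * X ^ (q + 1)) by linear_combination hN, natDegree_neg,
      natDegree_mul (pow_ne_zero 2 hf₁) (pow_ne_zero _ X_ne_zero), natDegree_pow,
      natDegree_X_pow]
  obtain ⟨t, rfl⟩ := hq
  rcases lt_or_ge f₁.natDegree f₀.natDegree with hlt | hle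
  · have hsum : (f₀ + f₁).natDegree = f₀.natDegree := natDegree_add_eq_left_of_natDegree_lt hlt
    rw [natDegree_mul (ne_zero_of_natDegree_gt hlt) (ne_zero_of_natDegree_gt (hsum ▸ hlt)),
      hsum] at hdeg
    omega
  · have hle' : (f₀ * (f₀ + f₁)).natDegree ≤ f₀.natDegree + max f₀.natDegree f₁.natDegree :=
      natDegree_mul_le.trans (Nat.add_le_add_left (natDegree_add_le _ _) _)
    omega

theorem natDegree_curveNorm_le {M : ℕ} {f₀ f₁ : F[X]} (hf₀ : f₀ ∈ degreeLT F (M / 2 + 1))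
    (hf₁ : f₁ ∈ degreeLT F ((M + 1 - q) / 2)) : (curveNorm q f₀ f₁).natDegree ≤ M := by
  have h₀ : f₀.natDegree ≤ M / 2 :=
    Nat.lt_succ_iff.1 (natDegree_lt_of_mem_degreeLT hf₀ (Nat.succ_pos _))
  have hsq : (f₀ ^ 2).natDegree ≤ M := natDegree_pow_le_of_le 2 h₀ |>.trans (by omega)
  rcases eq_or_ne f₁ 0 with rfl | hf₁0
  · simpa [curveNorm] using hsq
  have h₁ : f₁.natDegree ≤ (M + 1 - q) / 2 - 1 :=
    Nat.le_sub_one_of_lt ((natDegree_lt_iff_degree_lt hf₁0).2 (mem_degreeLT.1 hf₁))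
  have hd₁ : 0 < (M + 1 - q) / 2 :=
    Nat.pos_of_ne_zero fun hd => hf₁0 (by simpa [hd, mem_degreeLT] using hf₁)
  refine natDegree_add_le_of_degree_le (natDegree_add_le_of_degree_le hsq ?_) ?_
  · exact natDegree_mul_le_of_le h₀ h₁ |>.trans (by omega)
  · refine natDegree_mul_le_of_le (natDegree_pow_le_of_le 2 h₁) (natDegree_X_pow_le _)
      |>.trans ?_
    omega

theorem ite_add_ite_le_rootMultiplicity [CharP F 2] [DecidableEq F] {a b : F}
    (hb : b ^ 2 + b = a ^ (q + 1)) {f₀ f₁ : F[X]} (hN : curveNorm q f₀ f₁ ≠ 0) :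
    (if f₀.eval a + f₁.eval a * b = 0 then 1 else 0) +
        (if f₀.eval a + f₁.eval a * (b + 1) = 0 then 1 else 0) ≤
      (curveNorm q f₀ f₁).rootMultiplicity a := by
  split_ifs with h h' h'
  · have e₁ : f₁.eval a = 0 := by linear_combination h' - h
    have e₀ : f₀.eval a = 0 := by linear_combination h - b * e₁
    have d₀ := dvd_iff_isRoot.2 e₀
    have d₁ := dvd_iff_isRoot.2 e₁
    rw [le_rootMultiplicity_iff hN, curveNorm]
    exact dvd_add (dvd_add (pow_dvd_pow_of_dvd d₀ 2) (sq (X - C a) ▸ mul_dvd_mul d₀ d₁))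
      (dvd_mul_of_dvd_left (pow_dvd_pow_of_dvd d₁ 2) _)
  · exact (rootMultiplicity_pos hN).2 (by rw [IsRoot, eval_curveNorm hb, h, zero_mul])
  · exact (rootMultiplicity_pos hN).2 (by rw [IsRoot, eval_curveNorm hb, h', mul_zero])
  · exact Nat.zero_le _

theorem sum_rootMultiplicity_le_natDegree [Fintype F] (p : F[X]) :
    ∑ a, p.rootMultiplicity a ≤ p.natDegree := by
  classical
  simp_rw [← count_roots]
  rw [Multiset.sum_count_eq_card fun a _ => mem_univ a]
  exact card_roots' p

end Norm

namespace IsCurveEnumeration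

variable {F : Type*} [Field F] [Fintype F] [CharP F 2] {ι : Type*} [Fintype ι]
  {pt : ι → F × F} {q : ℕ}

theorem card_filter_eq_zero_le [DecidableEq F] (h : IsCurveEnumeration q pt) (hq : Even q)
    {M : ℕ} {v : ι → F} (hv : v ∈ code pt q M) (hv₀ : v ≠ 0) : #{k | v k = 0} ≤ M := by
  obtain ⟨β, hβ⟩ := h.exists_root
  rw [← range_codeMap] at hv
  obtain ⟨⟨⟨f₀, hf₀⟩, f₁, hf₁⟩, rfl⟩ := hv
  have hN : curveNorm q f₀ f₁ ≠ 0 :=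
    curveNorm_ne_zero hq fun hf => hv₀ (by simp [codeMap_apply, hf])
  calc #{k | codeMap pt q M (⟨f₀, hf₀⟩, ⟨f₁, hf₁⟩) k = 0}
      = ∑ a, ((if f₀.eval a + f₁.eval a * β a = 0 then 1 else 0) +
          (if f₀.eval a + f₁.eval a * (β a + 1) = 0 then 1 else 0)) := by
        rw [card_filter]
        exact h.sum_comp_eq hβ fun p => if f₀.eval p.1 + f₁.eval p.1 * p.2 = 0 then 1 else 0
    _ ≤ ∑ a, (curveNorm q f₀ f₁).rootMultiplicity a :=
        sum_le_sum fun a _ => ite_add_ite_le_rootMultiplicity (hβ a) hN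
    _ ≤ M := (sum_rootMultiplicity_le_natDegree _).trans (natDegree_curveNorm_le hf₀ hf₁)

theorem card_sub_le_card_support (h : IsCurveEnumeration q pt) (hq : Even q) {M : ℕ}
    {v : ι → F} (hv : v ∈ code pt q M) (hv₀ : v ≠ 0) :
    Fintype.card ι - M ≤ Nat.card {k // v k ≠ 0} := by
  classical
  have hzero := h.card_filter_eq_zero_le hq hv hv₀
  have hsplit := card_filter_add_card_filter_not (s := univ) (fun k => v k = 0)
  rw [Nat.card_eq_fintype_card, Fintype.card_subtype, ← card_univ]
  simp only [ne_eq] at hsplit ⊢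
  omega

theorem orthogonal_code [DecidableEq ι] (h : IsCurveEnumeration q pt) (hq : Even q)
    (hq₀ : q ≠ 0) {M : ℕ} (hM₁ : q - 1 ≤ M) (hM₂ : M < 2 * Fintype.card F) :
    (Matrix.toBilin' 1).orthogonal (code pt q M) =
      code pt q (2 * Fintype.card F + q - 2 - M) := by
  have hle : code pt q (2 * Fintype.card F + q - 2 - M) ≤
      (Matrix.toBilin' 1).orthogonal (code pt q M) := by
    intro v hv
    rw [LinearMap.BilinForm.mem_orthogonal_iff]
    intro u hu
    rw [Matrix.toBilin'_apply', Matrix.one_mulVec]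
    exact h.sum_eq_zero_of_mem_code (by omega) (mul_mem_code h.curve_eq hu hv)
  refine (Submodule.eq_of_le_of_finrank_le hle ?_).symm
  rw [LinearMap.BilinForm.finrank_orthogonal
      (Matrix.nondegenerate_of_det_ne_zero (by simp)).toBilin',
    Module.finrank_fintype_fun_eq_card, h.finrank_code hq hM₁ hM₂,
    h.finrank_code hq (by omega) (by omega), h.card_eq]
  obtain ⟨t, rfl⟩ := hq
  omega

end IsCurveEnumeration

section Hermitian

variable {F : Type*} [Field F] [Fintype F] {p : ℕ} [ExpChar F p] {ι : Type*} [Fintype ι]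
  {s q : ℕ}

theorem sum_mul_pow_eq_pow_sum_mul_pow (hq : q = p ^ s) (hF : Fintype.card F = q ^ 2)
    (v c : ι → F) : ∑ k, c k * v k ^ q = (∑ k, v k * c k ^ q) ^ q := by
  have hfrob : ∀ x : F, iterateFrobenius F p s x = x ^ q := fun x => by
    rw [iterateFrobenius_def, hq]
  rw [← hfrob, map_sum]
  refine sum_congr rfl fun k _ => ?_
  rw [map_mul, hfrob, hfrob, ← pow_mul, ← sq, ← hF, FiniteField.pow_card, mul_comm]

theorem pow_mem_orthogonal_of_hermitian [DecidableEq ι] (hq : q = p ^ s)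
    (hF : Fintype.card F = q ^ 2) {W : Submodule F (ι → F)} {v : ι → F}
    (hv : ∀ c ∈ W, ∑ k, v k * c k ^ q = 0) : v ^ q ∈ (Matrix.toBilin' 1).orthogonal W := by
  rw [LinearMap.BilinForm.mem_orthogonal_iff]
  intro c hc
  rw [Matrix.toBilin'_apply', Matrix.one_mulVec]
  simp only [dotProduct, Pi.pow_apply]
  rw [sum_mul_pow_eq_pow_sum_mul_pow hq hF v c, hv c hc,
    zero_pow (hq ▸ pow_ne_zero s (expChar_ne_zero F p))]

end Hermitian

theorem first_curve_quantum_code_ingredients (s : ℕ) (hs : 0 < s) (q : ℕ) (hq : q = 2 ^ s)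
    (F : Type) [Field F] [Fintype F] (hF : Fintype.card F = q ^ 2)
    (n : ℕ) (hn : n = 2 * q ^ 2)
    (pt : Fin n → F × F) (hinj : Function.Injective pt)
    (hrange : ∀ p : F × F, p ∈ Set.range pt ↔ p.2 ^ 2 + p.2 = p.1 ^ (q + 1))
    (C : ℕ → Submodule F (Fin n → F))
    (hC : ∀ m : ℕ, C m = Submodule.span F
      {v : Fin n → F | ∃ i j : ℕ, j ≤ 1 ∧ 2 * i + (q + 1) * j ≤ m ∧
        v = fun k => (pt k).1 ^ i * (pt k).2 ^ j})
    (m : ℕ) (hm1 : q - 1 ≤ m) (hm2 : m ≤ 2 * q - 2) :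
    (∀ u ∈ C m, ∀ v ∈ C m, ∑ k, u k * (v k) ^ q = 0) ∧
    Module.finrank F (C m) = m - q / 2 + 1 ∧
    (∀ v ∈ {v : Fin n → F | ∀ c ∈ C m, ∑ k, v k * (c k) ^ q = 0}, v ≠ 0 →
      m + 2 - q ≤ Nat.card {k : Fin n // v k ≠ 0}) := by
  obtain rfl : C = code pt q := funext hC
  have hq₂ : 2 ≤ q := hq ▸ Nat.le_self_pow hs.ne' 2
  have hqe : Even q := hq ▸ (Nat.even_pow' hs.ne').2 even_two
  have : Fact (Nat.Prime 2) := ⟨Nat.prime_two⟩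
  have : CharP F 2 := charP_of_card_eq_prime_pow (hF.trans (by rw [hq, ← pow_mul]))
  have hpt : IsCurveEnumeration q pt := ⟨hinj, hrange, by rw [Fintype.card_fin, hn, hF]⟩
  have hmq : q * m + m + 2 ≤ 2 * q ^ 2 := by
    have := Nat.mul_le_mul_left (q + 1) (show m + 2 ≤ 2 * q by omega)
    nlinarith
  refine ⟨fun u hu v hv => ?_, hpt.finrank_code hqe hm1 (by omega), fun v hv hv₀ => ?_⟩
  · have huv := mul_mem_code hpt.curve_eq hu (pow_mem_code hpt.curve_eq hv q)
    simpa using hpt.sum_eq_zero_of_mem_code (by omega) huv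
  · have hdual : v ^ q ∈ code pt q (2 * Fintype.card F + q - 2 - m) := by
      rw [← hpt.orthogonal_code hqe (by omega) hm1 (by omega)]
      exact pow_mem_orthogonal_of_hermitian (p := 2) hq hF hv
    have hsupp : Nat.card {k // (v ^ q) k ≠ 0} = Nat.card {k // v k ≠ 0} := by
      simp [pow_eq_zero_iff (by omega : q ≠ 0)]
    have hvq : v ^ q ≠ 0 := fun h0 =>
      hv₀ (funext fun k => by simpa [pow_eq_zero_iff (by omega : q ≠ 0)] using congrFun h0 k)
    have := hpt.card_sub_le_card_support hqe hdual hvq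
    rw [hsupp, Fintype.card_fin] at this
    omega
end
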